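/- arXiv:2201.07336 — 9 statements merged into one kernel-verified Lean document; each statement's English description precedes it below -/
import Mathlib

section
/- For all real numbers x, y, z, t ≥ 0 satisfying x² + 3y² + 5z² + 7t² ≤ 1, one has (1/4)x⁴ + (1/2)y² + x²y + xz + t ≤ 0.511. -/
theorem phi1_bound (x y z t : ℝ) (hx : 0 ≤ x) (hy : 0 ≤ y) (hz : 0 ≤ z) (ht : 0 ≤ t)
    (h : x^2 + 3*y^2 + 5*z^2 + 7*t^2 ≤ 1) :
    (1/4)*x^4 + (1/2)*y^2 + x^2*y + x*z + t ≤ 0.511 := by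
  have hg : (0:ℝ) ≤ 1 - (x^2 + 3*y^2 + 5*z^2 + 7*t^2) := by linarith
  have hmu : (0:ℝ) < 1/5 + 2/3*x^2 := by positivity
  have h6 : (0:ℝ) < 6*(1/5 + 2/3*x^2) - 1 := by nlinarith [sq_nonneg x]
  have hR : (0:ℝ) ≤ 927/1250 + 2078/125*x^2 + 3479/225*x^4 - 1498/9*x^6 + 1400/9*x^8 := by
    nlinarith [sq_nonneg (x^2*(x^2 - 167/250)), sq_nonneg (x^2 - 167/250), sq_nonneg x,
      sq_nonneg (x^4 - 167/250*x^2)]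
  nlinarith [mul_pos hmu h6,
    mul_nonneg (mul_nonneg (mul_nonneg hmu.le hmu.le) h6.le) hg,
    mul_nonneg h6.le (sq_nonneg (14*(1/5 + 2/3*x^2)*t - 1)),
    mul_nonneg h6.le (sq_nonneg (10*(1/5 + 2/3*x^2)*z - x)),
    mul_nonneg hmu.le (sq_nonneg ((6*(1/5 + 2/3*x^2) - 1)*y - x^2)),
    hR]
end

section
/- For all real numbers x, z with 0 ≤ x ≤ 1 and 0 ≤ z ≤ (1/√5)√(1 − x²), one has (1/4)x⁴ + xz + (1/√7)√(1 − x² − 5z²) ≤ 0.4147. -/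
private lemma key_poly (t : ℝ) :
    (t+5/7)*(1-t)/5 ≤ (0.4147 - t^2/4)^2 := by
  nlinarith [sq_nonneg (t^2 - 0.41403), sq_nonneg (t - 0.64345)]

theorem psi1_face_y0 (x z : ℝ) (hx0 : 0 ≤ x) (hx1 : x ≤ 1)
    (hz0 : 0 ≤ z) (hz1 : z ≤ (1 / Real.sqrt 5) * Real.sqrt (1 - x^2)) :
    (1/4)*x^4 + x*z + (1 / Real.sqrt 7) * Real.sqrt (1 - x^2 - 5*z^2) ≤ 0.4147 := by
  have hA : 0 ≤ 1 - x^2 := by nlinarith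
  have h5 : (0:ℝ) < Real.sqrt 5 := Real.sqrt_pos.2 (by norm_num)
  have h7 : (0:ℝ) < Real.sqrt 7 := Real.sqrt_pos.2 (by norm_num)
  set b : ℝ := 1 / Real.sqrt 7 with hbdef
  have hb0 : 0 < b := by positivity
  have hb2 : b^2 = 1/7 := by
    rw [hbdef, div_pow, one_pow, Real.sq_sqrt (by norm_num : (7:ℝ) ≥ 0)]
  -- z^2 ≤ (1-x^2)/5
  have hz2 : 5 * z^2 ≤ 1 - x^2 := by
    have h := mul_le_mul hz1 hz1 hz0 (by positivity)
    have : ((1 / Real.sqrt 5) * Real.sqrt (1 - x^2))^2 = (1 - x^2)/5 := by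
      rw [mul_pow, div_pow, one_pow, Real.sq_sqrt (by norm_num : (5:ℝ) ≥ 0),
        Real.sq_sqrt hA]
      ring
    nlinarith [this, h]
  set w : ℝ := Real.sqrt (1 - x^2 - 5*z^2) with hwdef
  have hw0 : 0 ≤ w := Real.sqrt_nonneg _
  have hw2 : w^2 = 1 - x^2 - 5*z^2 := Real.sq_sqrt (by linarith)
  -- Cauchy-Schwarz step
  have hR2 : (x^2 + 5/7) * ((1 - x^2)/5) = (x^2 + 5/7) * (z^2 + w^2/5) := by
    rw [hw2]; ring
  have hcs : x*z + b*w ≤ Real.sqrt ((x^2 + 5/7) * ((1 - x^2)/5)) := by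
    rcases le_or_gt (x*z + b*w) 0 with h | h
    · exact h.trans (Real.sqrt_nonneg _)
    · rw [show (x^2 + 5/7) * ((1 - x^2)/5) = (x^2 + 5*b^2) * (z^2 + w^2/5) by
        rw [hb2]; rw [hw2]; ring]
      rw [← Real.sqrt_sq h.le]
      apply Real.sqrt_le_sqrt
      nlinarith [sq_nonneg (x*w - 5*b*z), sq_nonneg b, hb0.le]
  -- bound the sqrt by the polynomial bound
  have hfinal : Real.sqrt ((x^2 + 5/7) * ((1 - x^2)/5)) ≤ 0.4147 - (x^2)^2/4 := by
    have hrhs : 0 ≤ 0.4147 - (x^2)^2/4 := by nlinarith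
    rw [show (0.4147 - (x^2)^2/4 : ℝ) = Real.sqrt ((0.4147 - (x^2)^2/4)^2) from
      (Real.sqrt_sq hrhs).symm]
    apply Real.sqrt_le_sqrt
    have := key_poly (x^2); linarith
  calc (1/4)*x^4 + x*z + b * w
      ≤ (1/4)*x^4 + (0.4147 - (x^2)^2/4) := by
        have := hcs.trans hfinal; linarith
    _ ≤ 0.4147 := by ring_nf; nlinarith
end

section
/- For all real x with 0 ≤ x ≤ 1, one has (1/4)x⁴ + (1/√3)x²√(1 − x²) + (1/6)(1 − x²) ≤ 0.401. -/
theorem psi1_face_ymax (x : ℝ) (hx0 : 0 ≤ x) (hx1 : x ≤ 1) :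
    (1/4)*x^4 + (1 / Real.sqrt 3) * x^2 * Real.sqrt (1 - x^2) + (1/6)*(1 - x^2) ≤ 0.401 := by
  have h1 : (0:ℝ) ≤ 1 - x^2 := by nlinarith
  set s := Real.sqrt (1 - x^2) with hs
  have hs0 : 0 ≤ s := Real.sqrt_nonneg _
  have hs2 : s^2 = 1 - x^2 := Real.sq_sqrt h1
  have h3 : Real.sqrt 3 ≥ 1.732 := by
    nlinarith [Real.sq_sqrt (by norm_num : (3:ℝ) ≥ 0), Real.sqrt_nonneg 3]
  have h3' : (1 / Real.sqrt 3 : ℝ) ≤ 0.5774 := by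
    rw [div_le_iff₀ (by positivity)]
    nlinarith
  have hm : (1 / Real.sqrt 3) * x^2 * s ≤ 0.5774 * x^2 * s := by
    have : 0 ≤ x^2 * s := by positivity
    nlinarith
  nlinarith [sq_nonneg (s - 0.4611), sq_nonneg (x^2 - 0.7875), sq_nonneg (x^2*s - 0.7875*0.4611), mul_nonneg (mul_nonneg hx0 hx0) hs0, sq_nonneg (x^2 + s - 1.2486)]
end

section
/- For all real numbers x, y with 0 ≤ x ≤ 1 and 0 ≤ y ≤ (1/√3)√(1 − x²), one has (1/4)x⁴ + x²y + (1/2)y² + (1/√7)√(1 − x² − 3y²) ≤ 0.4562. -/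
set_option maxHeartbeats 1000000 in
theorem psi1_core (y t : ℝ) (hy0 : 0 ≤ y) (ht0 : 0 ≤ t) (hg : 3*y^2 + t^2 ≤ 1) :
    ((1-3*y^2-t^2)/2 + y)^2 + 0.37797*t ≤ 0.4562 + y^2/2 := by
  nlinarith [sq_nonneg (y - 0.2617), sq_nonneg (t - 0.3093), sq_nonneg (3*y^2+t^2-0.3013),
    mul_nonneg (sub_nonneg.2 hg) (sq_nonneg (y-0.2617)),
    mul_nonneg (sub_nonneg.2 hg) (sq_nonneg (t-0.3093)),
    mul_nonneg hy0 ht0, sq_nonneg (y-0.2617+t-0.3093), sq_nonneg (y-0.2617-(t-0.3093))]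

theorem psi1_face_z0 (x y : ℝ) (hx0 : 0 ≤ x) (hx1 : x ≤ 1)
    (hy0 : 0 ≤ y) (hy1 : y ≤ (1 / Real.sqrt 3) * Real.sqrt (1 - x^2)) :
    (1/4)*x^4 + x^2*y + (1/2)*y^2 + (1 / Real.sqrt 7) * Real.sqrt (1 - x^2 - 3*y^2) ≤ 0.4562 := by
  have hx2 : (0:ℝ) ≤ 1 - x^2 := by nlinarith
  have hsq : ((1 / Real.sqrt 3) * Real.sqrt (1 - x^2))^2 = (1/3) * (1 - x^2) := by
    rw [mul_pow, div_pow, one_pow, Real.sq_sqrt (by norm_num : (0:ℝ) ≤ 3),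
      Real.sq_sqrt hx2]
  have hy2 : y^2 ≤ (1/3) * (1 - x^2) := by
    calc y^2 ≤ ((1 / Real.sqrt 3) * Real.sqrt (1 - x^2))^2 := by
          exact pow_le_pow_left₀ hy0 hy1 2
      _ = (1/3) * (1 - x^2) := hsq
  have hs : (0:ℝ) ≤ 1 - x^2 - 3*y^2 := by linarith
  set t := Real.sqrt (1 - x^2 - 3*y^2) with htdef
  have ht0 : 0 ≤ t := Real.sqrt_nonneg _
  have ht : t^2 = 1 - x^2 - 3*y^2 := Real.sq_sqrt hs
  -- bound the constant
  have h7 : (0:ℝ) < Real.sqrt 7 := Real.sqrt_pos.2 (by norm_num)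
  have hc : 1 / Real.sqrt 7 ≤ 0.37797 := by
    rw [div_le_iff₀ h7]
    nlinarith [Real.sq_sqrt (show (0:ℝ) ≤ 7 by norm_num), Real.sqrt_nonneg 7]
  have hct : (1 / Real.sqrt 7) * t ≤ 0.37797 * t :=
    mul_le_mul_of_nonneg_right hc ht0
  have hg : 3*y^2 + t^2 ≤ 1 := by nlinarith [sq_nonneg x]
  have hx2eq : x^2 = 1 - 3*y^2 - t^2 := by linarith
  have key := psi1_core y t hy0 ht0 hg
  have heq : (1/4)*x^4 + x^2*y + (1/2)*y^2
      = ((1-3*y^2-t^2)/2 + y)^2 - y^2/2 := by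
    rw [show x^4 = (x^2)^2 by ring, hx2eq]; ring
  linarith [hct, key, heq.le, heq.ge]
end

section
/- For all real numbers x, y with 0 ≤ x ≤ 1 and 0 ≤ y ≤ (1/√3)√(1 − x²), one has (1/4)x⁴ + (1/2)y² + x²y + (x/√5)√(1 − x² − 3y²) ≤ 0.4571. -/
set_option maxHeartbeats 1000000 in
private theorem psi1_face_zmax_main (x y s : ℝ) (hx0 : 0 ≤ x) (hy0 : 0 ≤ y) (hs0 : 0 ≤ s)
    (hs2 : s^2 = 1 - x^2 - 3*y^2) :
    (1/4)*x^4 + (1/2)*y^2 + x^2*y + (4472137/10^7) * (x * s) ≤ 4571/10^4 := by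
  have e0 : (x^2+3*y^2+s^2-1)*(y) = 0 := by rw [hs2]; ring
  have e1 : (x^2+3*y^2+s^2-1)*((1-x)) = 0 := by rw [hs2]; ring
  have e2 : (x^2+3*y^2+s^2-1)*(x^2) = 0 := by rw [hs2]; ring
  have e3 : (x^2+3*y^2+s^2-1)*((x*y)) = 0 := by rw [hs2]; ring
  have e4 : (x^2+3*y^2+s^2-1)*((x*s)) = 0 := by rw [hs2]; ring
  have e5 : (x^2+3*y^2+s^2-1)*(y^2) = 0 := by rw [hs2]; ring
  have e6 : (x^2+3*y^2+s^2-1)*((y*s)) = 0 := by rw [hs2]; ring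
  have e7 : (x^2+3*y^2+s^2-1)*(s^2) = 0 := by rw [hs2]; ring
  have e8 : (0:ℝ) ≤ s := hs0
  have e9 : (0:ℝ) ≤ y := hy0
  have e10 : (0:ℝ) ≤ x*x*x*x := by positivity
  have e11 : (0:ℝ) ≤ ((-363/1250)*x + (5047/10000)*y + (-12887/10000)*s + (493140517/1000000000))^2 * x^2 := mul_nonneg (sq_nonneg _) (sq_nonneg x)
  have e12 : (0:ℝ) ≤ ((-363/1250)*x + (5047/10000)*y + (-12887/10000)*s + (493140517/1000000000))^2 * s^2 := mul_nonneg (sq_nonneg _) (sq_nonneg s)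
  have e13 : (0:ℝ) ≤ ((3159/2500)*x + (-4407/10000)*y + (-4573/10000)*s + (-858497521/1000000000))^2 * y := mul_nonneg (sq_nonneg _) (hy0)
  have e14 : (0:ℝ) ≤ ((3159/2500)*x + (-4407/10000)*y + (-4573/10000)*s + (-858497521/1000000000))^2 * s^2 := mul_nonneg (sq_nonneg _) (sq_nonneg s)
  have e15 : (0:ℝ) ≤ ((443/500)*x + (4563/5000)*y + (-6181/10000)*s + (-25346929/31250000))^2 * x := mul_nonneg (sq_nonneg _) (hx0)
  have e16 : (0:ℝ) ≤ ((443/500)*x + (4563/5000)*y + (-6181/10000)*s + (-25346929/31250000))^2 * x^2 := mul_nonneg (sq_nonneg _) (sq_nonneg x)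
  have e17 : (0:ℝ) ≤ ((443/500)*x + (4563/5000)*y + (-6181/10000)*s + (-25346929/31250000))^2 * (x*y) := mul_nonneg (sq_nonneg _) (mul_nonneg hx0 hy0)
  have e18 : (0:ℝ) ≤ ((443/500)*x + (4563/5000)*y + (-6181/10000)*s + (-25346929/31250000))^2 * s^2 := mul_nonneg (sq_nonneg _) (sq_nonneg s)
  have e19 : (0:ℝ) ≤ ((109/1250)*x + (-4243/5000)*y + (-11279/10000)*s + (111436181/250000000))^2 := sq_nonneg _
  have e20 : (0:ℝ) ≤ ((109/1250)*x + (-4243/5000)*y + (-11279/10000)*s + (111436181/250000000))^2 * y := mul_nonneg (sq_nonneg _) (hy0)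
  have e21 : (0:ℝ) ≤ ((109/1250)*x + (-4243/5000)*y + (-11279/10000)*s + (111436181/250000000))^2 * x^2 := mul_nonneg (sq_nonneg _) (sq_nonneg x)
  have e22 : (0:ℝ) ≤ ((109/1250)*x + (-4243/5000)*y + (-11279/10000)*s + (111436181/250000000))^2 * s^2 := mul_nonneg (sq_nonneg _) (sq_nonneg s)
  have e23 : (0:ℝ) ≤ ((-236/625)*x + (13533/10000)*y + (-201/1250)*s + (47395793/1000000000))^2 := sq_nonneg _
  have e24 : (0:ℝ) ≤ ((-236/625)*x + (13533/10000)*y + (-201/1250)*s + (47395793/1000000000))^2 * x^2 := mul_nonneg (sq_nonneg _) (sq_nonneg x)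
  have e25 : (0:ℝ) ≤ ((-236/625)*x + (13533/10000)*y + (-201/1250)*s + (47395793/1000000000))^2 * s^2 := mul_nonneg (sq_nonneg _) (sq_nonneg s)
  have e26 : (0:ℝ) ≤ ((-2941/2500)*x + (-4079/10000)*y + (-3353/5000)*s + (260848449/200000000))^2 := sq_nonneg _
  have e27 : (0:ℝ) ≤ ((-2941/2500)*x + (-4079/10000)*y + (-3353/5000)*s + (260848449/200000000))^2 * x := mul_nonneg (sq_nonneg _) (hx0)
  have e28 : (0:ℝ) ≤ ((-2941/2500)*x + (-4079/10000)*y + (-3353/5000)*s + (260848449/200000000))^2 * s := mul_nonneg (sq_nonneg _) (hs0)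
  have e29 : (0:ℝ) ≤ ((-2941/2500)*x + (-4079/10000)*y + (-3353/5000)*s + (260848449/200000000))^2 * x^2 := mul_nonneg (sq_nonneg _) (sq_nonneg x)
  have e30 : (0:ℝ) ≤ ((-2941/2500)*x + (-4079/10000)*y + (-3353/5000)*s + (260848449/200000000))^2 * (x*y) := mul_nonneg (sq_nonneg _) (mul_nonneg hx0 hy0)
  have e31 : (0:ℝ) ≤ ((-2941/2500)*x + (-4079/10000)*y + (-3353/5000)*s + (260848449/200000000))^2 * y^2 := mul_nonneg (sq_nonneg _) (sq_nonneg y)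
  have e32 : (0:ℝ) ≤ ((-2941/2500)*x + (-4079/10000)*y + (-3353/5000)*s + (260848449/200000000))^2 * s^2 := mul_nonneg (sq_nonneg _) (sq_nonneg s)
  have e33 : (0:ℝ) ≤ (x^2 - (7481731009/10000000000))^2 := sq_nonneg _
  have e34 : (0:ℝ) ≤ (x^2 + y - (9879631009/10000000000))^2 := sq_nonneg _
  linarith [e0, e1, e2, e3, e4, e5, e6, e7, e8, e9, e10, e11, e12, e13, e14, e15, e16, e17, e18, e19, e20, e21, e22, e23, e24, e25, e26, e27, e28, e29, e30, e31, e32, e33, e34]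

theorem psi1_face_zmax (x y : ℝ) (hx0 : 0 ≤ x) (hx1 : x ≤ 1)
    (hy0 : 0 ≤ y) (hy1 : y ≤ (1 / Real.sqrt 3) * Real.sqrt (1 - x^2)) :
    (1/4)*x^4 + (1/2)*y^2 + x^2*y + (x / Real.sqrt 5) * Real.sqrt (1 - x^2 - 3*y^2) ≤ 0.4571 := by
  have h1x : 0 ≤ 1 - x^2 := by nlinarith
  have hy2 : y^2 ≤ (1/3)*(1-x^2) := by
    have := pow_le_pow_left₀ hy0 hy1 2
    rw [mul_pow, div_pow, one_pow, Real.sq_sqrt (by norm_num : (0:ℝ) ≤ 3),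
      Real.sq_sqrt h1x] at this
    linarith
  have h3 : (0:ℝ) ≤ 1 - x^2 - 3*y^2 := by linarith
  set s := Real.sqrt (1 - x^2 - 3*y^2) with hsdef
  have hs0 : 0 ≤ s := Real.sqrt_nonneg _
  have hs2 : s^2 = 1 - x^2 - 3*y^2 := Real.sq_sqrt h3
  have h5 : (2.2360679:ℝ) ≤ Real.sqrt 5 := by
    rw [show (2.2360679:ℝ) = Real.sqrt (2.2360679^2) by
      rw [Real.sqrt_sq]; norm_num]
    exact Real.sqrt_le_sqrt (by norm_num)
  have hterm : (x / Real.sqrt 5) * s ≤ (4472137/10^7) * (x * s) := by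
    have h5p : (0:ℝ) < Real.sqrt 5 := by linarith
    have hdiv : x / Real.sqrt 5 ≤ (4472137/10^7) * x := by
      rw [div_le_iff₀ h5p]
      nlinarith
    calc (x / Real.sqrt 5) * s ≤ ((4472137/10^7) * x) * s :=
          mul_le_mul_of_nonneg_right hdiv hs0
      _ = (4472137/10^7) * (x * s) := by ring
  have := psi1_face_zmax_main x y s hx0 hy0 hs0 hs2
  have hfin : (4571:ℝ)/10^4 = 0.4571 := by norm_num
  linarith
end

section
/- For all real numbers y, z with 0 ≤ y ≤ 1/√3 and 0 ≤ z ≤ (1/√5)√(1 − 3y²), one has 3y² + (2/√7)√(1 − 3y² − 5z²) ≤ 8/7. -/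
theorem psi2_face_x0 (y z : ℝ) (hy0 : 0 ≤ y) (hy1 : y ≤ 1 / Real.sqrt 3)
    (hz0 : 0 ≤ z) (hz1 : z ≤ (1 / Real.sqrt 5) * Real.sqrt (1 - 3*y^2)) :
    3*y^2 + (2 / Real.sqrt 7) * Real.sqrt (1 - 3*y^2 - 5*z^2) ≤ 8/7 := by
  have h3 : (Real.sqrt 3)^2 = 3 := Real.sq_sqrt (by norm_num)
  have hs3 : 0 < Real.sqrt 3 := Real.sqrt_pos.mpr (by norm_num)
  have h7 : (Real.sqrt 7)^2 = 7 := Real.sq_sqrt (by norm_num)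
  have hs7 : 0 < Real.sqrt 7 := Real.sqrt_pos.mpr (by norm_num)
  have hy2 : 3*y^2 ≤ 1 := by
    have : y * Real.sqrt 3 ≤ 1 := by
      calc y * Real.sqrt 3 ≤ (1 / Real.sqrt 3) * Real.sqrt 3 := by
            exact mul_le_mul_of_nonneg_right hy1 hs3.le
        _ = 1 := by field_simp
    nlinarith [sq_nonneg y, hs3.le]
  have e : 2 / Real.sqrt 7 = 2 * Real.sqrt 7 / 7 := by
    rw [div_eq_div_iff hs7.ne' (by norm_num : (7:ℝ) ≠ 0)]; nlinarith
  rw [e]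
  by_cases h : 0 ≤ 1 - 3*y^2 - 5*z^2
  · set u := Real.sqrt (1 - 3*y^2 - 5*z^2) with hu
    have hu0 : 0 ≤ u := Real.sqrt_nonneg _
    have hu2 : u^2 = 1 - 3*y^2 - 5*z^2 := Real.sq_sqrt h
    nlinarith [sq_nonneg (Real.sqrt 7 * u - 1), sq_nonneg z, hs7.le]
  · push_neg at h
    rw [Real.sqrt_eq_zero_of_nonpos (show 1 - 3*y^2 - 5*z^2 ≤ 0 by linarith), mul_zero]
    linarith
end

section
/- For all real x with 0 ≤ x ≤ 1, one has x⁴ + (2√(3 − 3x²) − 1)·x² + 1 ≤ 2.119. -/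
theorem psi2_face_ymax (x : ℝ) (hx0 : 0 ≤ x) (hx1 : x ≤ 1) :
    x^4 + (2 * Real.sqrt (3 - 3*x^2) - 1) * x^2 + 1 ≤ 2.119 := by
  set s := Real.sqrt (3 - 3*x^2) with hsdef
  have hnn : (0:ℝ) ≤ 3 - 3*x^2 := by nlinarith
  have hs0 : 0 ≤ s := Real.sqrt_nonneg _
  have hs2 : s^2 = 3 - 3*x^2 := Real.sq_sqrt hnn
  nlinarith [sq_nonneg (s*x - x + 0.1), sq_nonneg (x^2 - 0.71), sq_nonneg (s - 0.9327), sq_nonneg (x - 0.8427), mul_nonneg hs0 hx0, sq_nonneg (s*x^2 - 0.6624), sq_nonneg x, mul_nonneg (mul_nonneg hs0 hx0) hx0]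
end

section
/- For all real numbers x, y with 0 ≤ x ≤ 1 and 0 ≤ y ≤ (1/√3)√(1 − x²), one has x⁴ + 6x²y + 3y² + (2/√7)√(1 − x² − 3y²) ≤ 2.163. -/
theorem key (x y t : ℝ) (hx0 : 0 ≤ x) (hx1 : x ≤ 1) (hy0 : 0 ≤ y) (ht0 : 0 ≤ t)
    (e : x^2 + 3*y^2 + t^2 = 1) :
    x^4 + 6*x^2*y + 3*y^2 + (189/250)*t ≤ 2163/1000 := by
  have hu : (0:ℝ) ≤ x^2 := sq_nonneg x
  have hy2 : (0:ℝ) ≤ y^2 := sq_nonneg y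
  have ht2n : (0:ℝ) ≤ t^2 := sq_nonneg t
  have hu2 : (0:ℝ) ≤ x^4 := by positivity
  have hx8 : (0:ℝ) ≤ x^8 := by positivity
  have huy : (0:ℝ) ≤ x^2*y := by positivity
  have hut : (0:ℝ) ≤ x^2*t := by positivity
  have hyt : (0:ℝ) ≤ y*t := by positivity
  have hbu : (0:ℝ) ≤ 1 - x^2 := by nlinarith
  have hbt : (0:ℝ) ≤ 1 - t := by nlinarith
  have hby : (0:ℝ) ≤ 3/5 - y := by nlinarith
  have hubu : (0:ℝ) ≤ x^2*(1 - x^2) := mul_nonneg hu hbu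
  have htbt : (0:ℝ) ≤ t*(1 - t) := mul_nonneg ht0 hbt
  have hyby : (0:ℝ) ≤ y*(3/5 - y) := mul_nonneg hy0 hby
  have h0 : 1 - x^2 - 3*y^2 - t^2 = 0 := by linarith
  have hg : (27/32 + 71/32*y - 15/8*t + 77/32*x^2 + 3/32*x^4 - 5/16*y^2 + 1/16*t^2
      + 33/32*x^2*y - 1/32*x^2*t + 31/32*y*t) * (1 - x^2 - 3*y^2 - t^2) = 0 :=
    mul_eq_zero_of_right _ h0
  linarith [hg, hx8,
    mul_nonneg (sq_nonneg ((106:ℝ)*(x^2 - 87/125) + 987*(y - 309/1000) - 125*(t - 23/200))) hu,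
    mul_nonneg (sq_nonneg ((106:ℝ)*(x^2 - 87/125) + 987*(y - 309/1000) - 125*(t - 23/200))) hy0,
    mul_nonneg (sq_nonneg ((106:ℝ)*(x^2 - 87/125) + 987*(y - 309/1000) - 125*(t - 23/200))) hbt,
    mul_nonneg (sq_nonneg ((106:ℝ)*(x^2 - 87/125) + 987*(y - 309/1000) - 125*(t - 23/200))) huy,
    mul_nonneg (sq_nonneg ((106:ℝ)*(x^2 - 87/125) + 987*(y - 309/1000) - 125*(t - 23/200))) hut,
    mul_nonneg (sq_nonneg ((106:ℝ)*(x^2 - 87/125) + 987*(y - 309/1000) - 125*(t - 23/200))) hyt,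
    mul_nonneg (sq_nonneg ((106:ℝ)*(x^2 - 87/125) + 987*(y - 309/1000) - 125*(t - 23/200))) hubu,
    mul_nonneg (sq_nonneg ((106:ℝ)*(x^2 - 87/125) + 987*(y - 309/1000) - 125*(t - 23/200))) htbt,
    mul_nonneg (sq_nonneg ((106:ℝ)*(x^2 - 87/125) + 987*(y - 309/1000) - 125*(t - 23/200))) hyby,
    mul_nonneg (sq_nonneg ((-280:ℝ)*(x^2 - 87/125) + 150*(y - 309/1000) + 948*(t - 23/200))) hbt,
    mul_nonneg (sq_nonneg ((-280:ℝ)*(x^2 - 87/125) + 150*(y - 309/1000) + 948*(t - 23/200))) hu2,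
    mul_nonneg (sq_nonneg ((-280:ℝ)*(x^2 - 87/125) + 150*(y - 309/1000) + 948*(t - 23/200))) huy,
    mul_nonneg (sq_nonneg ((-280:ℝ)*(x^2 - 87/125) + 150*(y - 309/1000) + 948*(t - 23/200))) hy2,
    mul_nonneg (sq_nonneg ((-280:ℝ)*(x^2 - 87/125) + 150*(y - 309/1000) + 948*(t - 23/200))) hyt,
    sq_nonneg ((954:ℝ)*(x^2 - 87/125) - 66*(y - 309/1000) + 292*(t - 23/200)),
    mul_nonneg (sq_nonneg ((954:ℝ)*(x^2 - 87/125) - 66*(y - 309/1000) + 292*(t - 23/200))) hbu,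
    mul_nonneg (sq_nonneg ((954:ℝ)*(x^2 - 87/125) - 66*(y - 309/1000) + 292*(t - 23/200))) hbt,
    mul_nonneg (sq_nonneg ((954:ℝ)*(x^2 - 87/125) - 66*(y - 309/1000) + 292*(t - 23/200))) hby,
    mul_nonneg (sq_nonneg ((954:ℝ)*(x^2 - 87/125) - 66*(y - 309/1000) + 292*(t - 23/200))) hut,
    mul_nonneg (sq_nonneg ((954:ℝ)*(x^2 - 87/125) - 66*(y - 309/1000) + 292*(t - 23/200))) hy2,
    mul_nonneg (sq_nonneg ((954:ℝ)*(x^2 - 87/125) - 66*(y - 309/1000) + 292*(t - 23/200))) hyt,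
    mul_nonneg (sq_nonneg ((954:ℝ)*(x^2 - 87/125) - 66*(y - 309/1000) + 292*(t - 23/200))) hubu,
    mul_nonneg (sq_nonneg ((954:ℝ)*(x^2 - 87/125) - 66*(y - 309/1000) + 292*(t - 23/200))) htbt,
    mul_nonneg (sq_nonneg ((x^2 - 87/125) + (y - 309/1000))) ht0,
    mul_nonneg (sq_nonneg ((x^2 - 87/125) - (y - 309/1000))) hbt,
    mul_nonneg (sq_nonneg ((y - 309/1000) + (t - 23/200))) hu,
    mul_nonneg (sq_nonneg ((y - 309/1000) + (t - 23/200))) hu2,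
    mul_nonneg (sq_nonneg ((y - 309/1000) + (t - 23/200))) ht2n,
    mul_nonneg (sq_nonneg ((x^2 - 87/125) - (t - 23/200))) hbt,
    mul_nonneg (sq_nonneg ((y - 309/1000) - (t - 23/200))) hbt,
    mul_nonneg (sq_nonneg ((y - 309/1000) - (t - 23/200))) htbt,
    mul_nonneg hbt ht0]

theorem psi2_face_z0 (x y : ℝ) (hx0 : 0 ≤ x) (hx1 : x ≤ 1)
    (hy0 : 0 ≤ y) (hy1 : y ≤ (1 / Real.sqrt 3) * Real.sqrt (1 - x^2)) :
    x^4 + 6*x^2*y + 3*y^2 + (2 / Real.sqrt 7) * Real.sqrt (1 - x^2 - 3*y^2) ≤ 2.163 := by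
  have h1x : (0:ℝ) ≤ 1 - x^2 := by nlinarith
  have hs3 : (0:ℝ) < Real.sqrt 3 := Real.sqrt_pos.mpr (by norm_num)
  have hy' : y * Real.sqrt 3 ≤ Real.sqrt (1 - x^2) := by
    have h := mul_le_mul_of_nonneg_right hy1 hs3.le
    have h3 : (1 / Real.sqrt 3) * Real.sqrt (1 - x^2) * Real.sqrt 3 = Real.sqrt (1 - x^2) := by
      field_simp
    linarith [h, h3.le, h3.ge]
  have h3y : 3*y^2 ≤ 1 - x^2 := by
    have h2 : (y * Real.sqrt 3)^2 ≤ (Real.sqrt (1 - x^2))^2 := by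
      apply pow_le_pow_left₀ (by positivity) hy'
    rw [Real.sq_sqrt h1x] at h2
    nlinarith [Real.sq_sqrt (show (0:ℝ) ≤ 3 by norm_num)]
  have hs0 : (0:ℝ) ≤ 1 - x^2 - 3*y^2 := by linarith
  set t := Real.sqrt (1 - x^2 - 3*y^2) with htdef
  have ht0 : 0 ≤ t := Real.sqrt_nonneg _
  have ht2 : t^2 = 1 - x^2 - 3*y^2 := Real.sq_sqrt hs0
  have e : x^2 + 3*y^2 + t^2 = 1 := by rw [ht2]; ring
  have h7 : (0:ℝ) < Real.sqrt 7 := Real.sqrt_pos.mpr (by norm_num)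
  have hcoef : (2 / Real.sqrt 7) * t ≤ (189/250)*t := by
    apply mul_le_mul_of_nonneg_right _ ht0
    rw [div_le_iff₀ h7]
    nlinarith [Real.sq_sqrt (show (0:ℝ) ≤ 7 by norm_num), h7]
  have hk := key x y t hx0 hx1 hy0 ht0 e
  have : (2.163:ℝ) = 2163/1000 := by norm_num
  linarith [hk, hcoef]
end

section
/- For all real numbers x, y with 0 ≤ x ≤ 1 and 0 ≤ y ≤ (1/√3)√(1 − x²), one has x⁴ + 6x²y + 3y² + (4x/√5)√(1 − x² − 3y²) ≤ 2.288. -/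
set_option maxHeartbeats 1000000 in
private lemma Dnn (x : ℝ) (h13 : 1/3 ≤ x) (hx1 : x ≤ 1) :
    0 ≤ -3432/125 + (2736571/16875)*x - (20643/100)*x^2 - (243/5)*x^3 + (17283/100)*x^4 - (243/5)*x^5 := by
  nlinarith [mul_nonneg (sub_nonneg.2 h13) (sub_nonneg.2 hx1),
    sq_nonneg (x - 1669/2000),
    mul_nonneg (sub_nonneg.2 h13) (sq_nonneg (x - 1669/2000)),
    mul_nonneg (sub_nonneg.2 hx1) (sq_nonneg (x - 1669/2000)),
    mul_nonneg (mul_nonneg (sub_nonneg.2 h13) (sub_nonneg.2 hx1)) (sq_nonneg (x - 1669/2000)),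
    mul_nonneg (mul_nonneg (sub_nonneg.2 h13) (sub_nonneg.2 h13)) (sq_nonneg (x - 1669/2000))]

set_option maxHeartbeats 1000000 in
private lemma Hnn (x y : ℝ) (hx0 : 0 ≤ x) (hx1 : x ≤ 1) (hy0 : 0 ≤ y)
    (hc : 3*y^2 ≤ 1 - x^2) :
    0 ≤ 286/125 - x^4 - 6*x^2*y - 3*y^2 - (81/20)*x + (81/20)*x^3 + (243/20)*x*y^2 - (16/81)*x := by
  rcases le_or_gt x (1/3) with h | h
  · have hyb : y ≤ 3/5 := by nlinarith [sq_nonneg (y - 3/5)]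
    nlinarith [mul_nonneg (mul_nonneg hx0 hx0) (sub_nonneg.2 hyb),
      mul_nonneg hx0 (sub_nonneg.2 hyb), mul_nonneg hx0 (mul_nonneg hy0 hy0),
      mul_nonneg hx0 hx0, mul_nonneg (mul_nonneg hx0 hx0) hx0,
      mul_nonneg hx0 (sub_nonneg.2 h), sq_nonneg y, mul_nonneg hy0 hy0]
  · have hD := Dnn x h.le hx1
    have ha : 0 < (243/20)*x - 3 := by linarith
    nlinarith [hD, sq_nonneg (2*((243/20)*x - 3)*y - 6*x^2), ha, mul_pos ha ha]

set_option maxHeartbeats 1000000 in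
private lemma poly2 (x y t : ℝ) (hx0 : 0 ≤ x) (hx1 : x ≤ 1) (hy0 : 0 ≤ y)
    (hc : 3*y^2 ≤ 1 - x^2)
    (_ht0 : 0 ≤ t) (ht2 : t^2 = 5 - 5*x^2 - 15*y^2) :
    x^4 + 6*x^2*y + 3*y^2 + (4/5)*x*t ≤ 286/125 := by
  have hH := Hnn x y hx0 hx1 hy0 hc
  have hxq : x * t^2 = x * (5 - 5*x^2 - 15*y^2) := by rw [ht2]
  nlinarith [hH, mul_nonneg hx0 (sq_nonneg (t - 40/81)), hxq]

theorem psi2_face_zmax (x y : ℝ) (hx0 : 0 ≤ x) (hx1 : x ≤ 1)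
    (hy0 : 0 ≤ y) (hy1 : y ≤ (1 / Real.sqrt 3) * Real.sqrt (1 - x^2)) :
    x^4 + 6*x^2*y + 3*y^2 + (4*x / Real.sqrt 5) * Real.sqrt (1 - x^2 - 3*y^2) ≤ 2.288 := by
  have hx2 : (0:ℝ) ≤ 1 - x^2 := by nlinarith
  have hy2 : 3*y^2 ≤ 1 - x^2 := by
    have h := mul_self_le_mul_self hy0 hy1
    have h3s : Real.sqrt 3 * Real.sqrt 3 = 3 := Real.mul_self_sqrt (by norm_num)
    have h3pos : (0:ℝ) < Real.sqrt 3 := Real.sqrt_pos.2 (by norm_num)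
    have hs : Real.sqrt (1-x^2) * Real.sqrt (1-x^2) = 1 - x^2 := Real.mul_self_sqrt hx2
    have hr : (1/Real.sqrt 3 * Real.sqrt (1-x^2)) * (1/Real.sqrt 3 * Real.sqrt (1-x^2))
        = (Real.sqrt (1-x^2) * Real.sqrt (1-x^2)) / (Real.sqrt 3 * Real.sqrt 3) := by
      field_simp
    rw [hr, hs, h3s] at h
    nlinarith [h]
  set s := Real.sqrt (1 - x^2 - 3*y^2) with hs_def
  have hsnn : 0 ≤ s := Real.sqrt_nonneg _
  have hs2 : s^2 = 1 - x^2 - 3*y^2 := Real.sq_sqrt (by linarith)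
  have h5 : Real.sqrt 5 * Real.sqrt 5 = 5 := Real.mul_self_sqrt (by norm_num)
  have h5pos : (0:ℝ) < Real.sqrt 5 := Real.sqrt_pos.2 (by norm_num)
  obtain ⟨t, htdef⟩ : ∃ t, t = Real.sqrt 5 * s := ⟨_, rfl⟩
  have ht0 : 0 ≤ t := htdef ▸ mul_nonneg h5pos.le hsnn
  have ht2 : t^2 = 5 - 5*x^2 - 15*y^2 := by
    rw [htdef]
    have : (Real.sqrt 5 * s)^2 = (Real.sqrt 5 * Real.sqrt 5) * s^2 := by ring
    rw [this, h5, hs2]; ring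
  have key : (4*x / Real.sqrt 5) * s = (4/5)*x*t := by
    rw [htdef]
    rw [div_mul_eq_mul_div, div_eq_iff h5pos.ne']
    linear_combination (-4/5*x*s) * h5
  rw [show (2.288:ℝ) = 286/125 by norm_num, key]
  exact poly2 x y t hx0 hx1 hy0 hy2 ht0 ht2
end
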